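/- arXiv:2601.10849 — 2 statements merged into one kernel-verified Lean document; each statement's English description precedes it below -/
import Mathlib

section
/- Let f : ℝ^N → ℝ satisfy: for all i and all vectors x, y with x_j = y_j for j ≠ i and x_i ≤ y_i, we have f(x) ≤ f(y) (coordinatewise monotonicity). Let A_i be nonempty finite sets and let u_i* ∈ argmax over A_i of g_i for given functions g_i : A_i → ℝ. Then the vector (u_1*, …, u_N*) maximizes the composed function u ↦ f(g_1(u_1), …, g_N(u_N)) over the product set A_1 × ⋯ × A_N. -/
open Function

/- Raise the coordinates from `x` to `y` one at a time: each step changes a single coordinate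
upwards, and `Finset.piecewise` records the intermediate points. -/
theorem monotone_of_monotone_coordinatewise {ι : Type*} [Finite ι] {β : ι → Type*}
    [∀ i, Preorder (β i)] {γ : Type*} [Preorder γ] {f : (∀ i, β i) → γ}
    (hf : ∀ (i : ι) (x y : ∀ i, β i), (∀ j, j ≠ i → x j = y j) → x i ≤ y i → f x ≤ f y) :
    Monotone f := by
  classical
  cases nonempty_fintype ι
  intro x y hxy
  have hstep : ∀ s : Finset ι, f x ≤ f (s.piecewise y x) := by
    intro s
    induction s using Finset.induction with
    | empty => simp
    | insert i s his ih =>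
      rw [Finset.piecewise_insert]
      refine ih.trans (hf i _ _ (fun j hj => (update_of_ne hj _ _).symm) ?_)
      rw [update_self, Finset.piecewise_eq_of_notMem _ _ _ his]
      exact hxy i
  simpa using hstep Finset.univ

theorem stmt1_general {N : ℕ} {α : Fin N → Type*} (f : (Fin N → ℝ) → ℝ)
    (hmono : ∀ (i : Fin N) (x y : Fin N → ℝ),
      (∀ j, j ≠ i → x j = y j) → x i ≤ y i → f x ≤ f y)
    (A : ∀ i, Finset (α i))
    (g : ∀ i, α i → ℝ) (ustar : ∀ i, α i)
    (hstar_max : ∀ i, ∀ a ∈ A i, g i a ≤ g i (ustar i)) :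
    ∀ u : ∀ i, α i, (∀ i, u i ∈ A i) →
      f (fun i => g i (u i)) ≤ f (fun i => g i (ustar i)) :=
  fun u hu => monotone_of_monotone_coordinatewise hmono fun i => hstar_max i (u i) (hu i)

/-- QMIX consistency: if `f : ℝ^N → ℝ` is coordinatewise monotone nondecreasing,
`A i` are nonempty finite action sets, `g i` are local utility functions and `ustar i`
is a local greedy maximizer of `g i` over `A i`, then the tuple `ustar` maximizes
`u ↦ f (fun i => g i (u i))` over the product of the `A i`. -/
theorem stmt1 {N : ℕ} {α : Fin N → Type*} (f : (Fin N → ℝ) → ℝ)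
    (hmono : ∀ (i : Fin N) (x y : Fin N → ℝ),
      (∀ j, j ≠ i → x j = y j) → x i ≤ y i → f x ≤ f y)
    (A : ∀ i, Finset (α i)) (hA : ∀ i, (A i).Nonempty)
    (g : ∀ i, α i → ℝ) (ustar : ∀ i, α i)
    (hstar_mem : ∀ i, ustar i ∈ A i)
    (hstar_max : ∀ i, ∀ a ∈ A i, g i a ≤ g i (ustar i)) :
    ∀ u : ∀ i, α i, (∀ i, u i ∈ A i) →
      f (fun i => g i (u i)) ≤ f (fun i => g i (ustar i)) :=
  stmt1_general f hmono A g ustar hstar_max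
end

section
/- Let I be a nonempty finite set, D_i > 0, and R_i : (0, B] → (0, ∞) continuous, strictly increasing with lim_{b→0⁺} R_i(b) = 0. Then at any optimal solution (b_i*) of the problem min max_i D_i/R_i(b_i) subject to Σ b_i ≤ B, b_i > 0, the bandwidth constraint is tight (Σ b_i* = B) and all ratios are equal: D_i/R_i(b_i*) is the same for every i ∈ I. -/
/-!
Each collection time `D i / R i (b i)` is strictly decreasing in the node's own bandwidth.
If bandwidth is left over, spreading it over all nodes shortens every collection time, so the
maximum drops. If some node finishes strictly before the maximum, continuity lets it give up a
little bandwidth while still finishing early; sharing that amount among all nodes shortens every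
other collection time, so again the maximum drops. Both contradict optimality.
-/

open Set Finset Filter Topology

namespace Bandwidth

variable {I : Type*} [Fintype I]

def Feasible (B : ℝ) (b : I → ℝ) : Prop := (∀ i, 0 < b i) ∧ ∑ i, b i ≤ B

variable {B : ℝ} {b : I → ℝ}

lemma Feasible.mem_Ioc (hb : Feasible B b) (i : I) : b i ∈ Ioc 0 B :=
  ⟨hb.1 i, (single_le_sum (fun j _ => (hb.1 j).le) (mem_univ i)).trans hb.2⟩

lemma feasible_add_slack [Nonempty I] (hb : ∀ i, 0 < b i) (hsum : ∑ i, b i < B) :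
    Feasible B fun i => b i + (B - ∑ i, b i) / Fintype.card I := by
  have hn : (0 : ℝ) < Fintype.card I := by exact_mod_cast Fintype.card_pos
  refine ⟨fun i => by have := hb i; positivity, ?_⟩
  rw [sum_add_distrib, sum_const, card_univ, nsmul_eq_mul, mul_div_cancel₀ _ hn.ne']
  linarith

/-- Node `j` drops to bandwidth `y ≤ b j`, and the amount freed is shared by all nodes. -/
lemma Feasible.update_share [DecidableEq I] (hb : Feasible B b) {j : I} {y : ℝ} (hy : 0 < y)
    (hyj : y ≤ b j) :
    Feasible B (Function.update (fun i => b i + (b j - y) / Fintype.card I) j y) := by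
  have hn : (0 : ℝ) < Fintype.card I := by exact_mod_cast Fintype.card_pos_iff.mpr ⟨j⟩
  have hc : 0 ≤ (b j - y) / Fintype.card I := div_nonneg (by linarith) hn.le
  refine ⟨fun i => ?_, ?_⟩
  · rcases eq_or_ne i j with rfl | hij
    · simpa using hy
    · simpa [Function.update_of_ne hij] using add_pos_of_pos_of_nonneg (hb.1 i) hc
  · have hshared := sum_eq_add_sum_sdiff_singleton_of_mem (mem_univ j)
      fun i => b i + (b j - y) / Fintype.card I
    rw [sum_add_distrib, sum_const, card_univ, nsmul_eq_mul, mul_div_cancel₀ _ hn.ne'] at hshared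
    rw [sum_update_of_mem (mem_univ j)]
    linarith [hb.2]

variable [Nonempty I]

def maxTime (f : I → ℝ → ℝ) (b : I → ℝ) : ℝ := univ.sup' univ_nonempty fun i => f i (b i)

def IsOptimal (B : ℝ) (f : I → ℝ → ℝ) (bstar : I → ℝ) : Prop :=
  ∀ b, Feasible B b → maxTime f bstar ≤ maxTime f b

variable {f : I → ℝ → ℝ} {bstar : I → ℝ}

lemma le_maxTime (f : I → ℝ → ℝ) (b : I → ℝ) (i : I) : f i (b i) ≤ maxTime f b :=
  le_sup' (fun i => f i (b i)) (mem_univ i)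

lemma IsOptimal.exists_le (hopt : IsOptimal B f bstar) (hb : Feasible B b) :
    ∃ i, maxTime f bstar ≤ f i (b i) := by
  simpa [maxTime] using hopt b hb

lemma IsOptimal.sum_eq (hopt : IsOptimal B f bstar) (hf : ∀ i, StrictAntiOn (f i) (Ioc 0 B))
    (hbstar : Feasible B bstar) : ∑ i, bstar i = B := by
  by_contra hne
  have hslack := feasible_add_slack hbstar.1 (hbstar.2.lt_of_ne hne)
  have hε : 0 < (B - ∑ i, bstar i) / Fintype.card I :=
    div_pos (by linarith [hbstar.2.lt_of_ne hne]) (by exact_mod_cast Fintype.card_pos)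
  obtain ⟨i, hi⟩ := hopt.exists_le hslack
  have hfaster := hf i (hbstar.mem_Ioc i) (hslack.mem_Ioc i) (lt_add_of_pos_right _ hε)
  exact (le_maxTime f bstar i).not_gt (hi.trans_lt hfaster)

lemma IsOptimal.eq_maxTime (hopt : IsOptimal B f bstar) (hf : ∀ i, StrictAntiOn (f i) (Ioc 0 B))
    (hcont : ∀ i, ContinuousOn (f i) (Ioc 0 B)) (hbstar : Feasible B bstar) (j : I) :
    f j (bstar j) = maxTime f bstar := by
  classical
  refine (le_maxTime f bstar j).eq_of_not_lt fun hjM => ?_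
  have hj := hbstar.mem_Ioc j
  have hleft : Ioc 0 B ∈ 𝓝[<] bstar j :=
    mem_of_superset (Ioo_mem_nhdsLT hj.1) fun x hx => ⟨hx.1, hx.2.le.trans hj.2⟩
  obtain ⟨y, hyM, hy⟩ :=
    ((((hcont j).continuousWithinAt hj).mono_of_mem_nhdsWithin hleft).eventually_lt_const hjM
      |>.and (Ioo_mem_nhdsLT hj.1)).exists
  have hshare := hbstar.update_share hy.1 hy.2.le
  obtain ⟨i, hi⟩ := hopt.exists_le hshare
  rcases eq_or_ne i j with rfl | hij
  · exact (hi.trans_lt (by rwa [Function.update_self])).false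
  · have hshift : 0 < (bstar j - y) / Fintype.card I :=
      div_pos (by linarith [hy.2]) (by exact_mod_cast Fintype.card_pos)
    have hfaster := hf i (hbstar.mem_Ioc i) (hshare.mem_Ioc i)
      (by simpa [Function.update_of_ne hij] using hshift)
    exact (le_maxTime f bstar i).not_gt (hi.trans_lt hfaster)

end Bandwidth

lemma StrictMonoOn.const_div {s : Set ℝ} {g : ℝ → ℝ} {d : ℝ} (hd : 0 < d)
    (hg : StrictMonoOn g s) (hpos : ∀ x ∈ s, 0 < g x) : StrictAntiOn (fun x => d / g x) s :=
  fun _ hx _ hy hxy => div_lt_div_of_pos_left hd (hpos _ hx) (hg hx hy hxy)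

theorem stmt6_general {I : Type*} [Fintype I] [Nonempty I]
    (B : ℝ) (D : I → ℝ) (hD : ∀ i, 0 < D i)
    (R : I → ℝ → ℝ)
    (hRcont : ∀ i, ContinuousOn (R i) (Ioc 0 B))
    (hRmono : ∀ i, StrictMonoOn (R i) (Ioc 0 B))
    (hRpos : ∀ i, ∀ b ∈ Ioc (0:ℝ) B, 0 < R i b)
    (bstar : I → ℝ) (hb_pos : ∀ i, 0 < bstar i) (hb_sum : (∑ i, bstar i) ≤ B)
    (hopt : ∀ b : I → ℝ, (∀ i, 0 < b i) → (∑ i, b i) ≤ B →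
      Finset.univ.sup' Finset.univ_nonempty (fun i => D i / R i (bstar i)) ≤
        Finset.univ.sup' Finset.univ_nonempty (fun i => D i / R i (b i))) :
    (∑ i, bstar i) = B ∧
      ∀ i j : I, D i / R i (bstar i) = D j / R j (bstar j) := by
  have hanti i : StrictAntiOn (fun x => D i / R i x) (Ioc 0 B) :=
    (hRmono i).const_div (hD i) (hRpos i)
  have hcont i : ContinuousOn (fun x => D i / R i x) (Ioc 0 B) :=
    continuousOn_const.div (hRcont i) fun x hx => (hRpos i x hx).ne'
  have hopt' : Bandwidth.IsOptimal B (fun i x => D i / R i x) bstar :=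
    fun b hb => hopt b hb.1 hb.2
  have hbstar : Bandwidth.Feasible B bstar := ⟨hb_pos, hb_sum⟩
  refine ⟨hopt'.sum_eq hanti hbstar, fun i j => ?_⟩
  rw [hopt'.eq_maxTime hanti hcont hbstar i, hopt'.eq_maxTime hanti hcont hbstar j]

/-- At any optimal solution of the min-max bandwidth allocation problem
`min max_i D_i/R_i(b_i) s.t. Σ b_i ≤ B, b_i > 0`, the bandwidth constraint is tight and
all collection times `D_i/R_i(b_i*)` are equal. -/
theorem stmt6 {I : Type*} [Fintype I] [Nonempty I]
    (B : ℝ) (hB : 0 < B) (D : I → ℝ) (hD : ∀ i, 0 < D i)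
    (R : I → ℝ → ℝ)
    (hRcont : ∀ i, ContinuousOn (R i) (Ioc 0 B))
    (hRmono : ∀ i, StrictMonoOn (R i) (Ioc 0 B))
    (hRpos : ∀ i, ∀ b ∈ Ioc (0:ℝ) B, 0 < R i b)
    (hR0 : ∀ i, Filter.Tendsto (R i) (nhdsWithin 0 (Ioi 0)) (nhds 0))
    (bstar : I → ℝ) (hb_pos : ∀ i, 0 < bstar i) (hb_sum : (∑ i, bstar i) ≤ B)
    (hopt : ∀ b : I → ℝ, (∀ i, 0 < b i) → (∑ i, b i) ≤ B →
      Finset.univ.sup' Finset.univ_nonempty (fun i => D i / R i (bstar i)) ≤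
        Finset.univ.sup' Finset.univ_nonempty (fun i => D i / R i (b i))) :
    (∑ i, bstar i) = B ∧
      ∀ i j : I, D i / R i (bstar i) = D j / R j (bstar j) :=
  stmt6_general B D hD R hRcont hRmono hRpos bstar hb_pos hb_sum hopt
end
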